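/- arXiv:2101.06937 — 3 statements merged into one kernel-verified Lean document; each statement's English description precedes it below -/
import Mathlib

section
/- If ‖P_A P_{B|A} − P'_A P'_{B|A}‖₁ = ε, then there exists a ∈ 𝒜 with P_A(a) > 0 such that ‖P_{B|A}(·|a) − P'_{B|A}(·|a)‖₁ ≤ 2ε. -/
open Finset

/-- If the L1 distance between the joints `P_A P_{B|A}` and `P'_A P'_{B|A}` equals `ε`,
then there exists `a` with `P_A a > 0` whose conditionals are within `2ε` in L1 distance. -/
theorem exists_good_conditional {A B : Type*} [Fintype A] [Fintype B]
    (PA P'A : A → ℝ) (K K' : A → B → ℝ) (ε : ℝ)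
    (hPA0 : ∀ a, 0 ≤ PA a) (hPA1 : ∑ a, PA a = 1)
    (hP'A0 : ∀ a, 0 ≤ P'A a) (hP'A1 : ∑ a, P'A a = 1)
    (hK0 : ∀ a b, 0 ≤ K a b) (hK1 : ∀ a, ∑ b, K a b = 1)
    (hK'0 : ∀ a b, 0 ≤ K' a b) (hK'1 : ∀ a, ∑ b, K' a b = 1)
    (h : ∑ x : A × B, |PA x.1 * K x.1 x.2 - P'A x.1 * K' x.1 x.2| = ε) :
    ∃ a : A, 0 < PA a ∧ ∑ b, |K a b - K' a b| ≤ 2 * ε := by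
  set f : A → ℝ := fun a => ∑ b, |PA a * K a b - P'A a * K' a b| with hf
  have hsum : ∑ a, f a = ε := by
    rw [← h, Fintype.sum_prod_type]
  -- marginal bound
  have hmarg : ∑ a, |PA a - P'A a| ≤ ε := by
    rw [← hsum]
    apply Finset.sum_le_sum
    intro a _
    have : PA a - P'A a = ∑ b, (PA a * K a b - P'A a * K' a b) := by
      rw [Finset.sum_sub_distrib, ← Finset.mul_sum, ← Finset.mul_sum, hK1, hK'1]
      ring
    rw [this]
    exact Finset.abs_sum_le_sum_abs _ _
  -- pointwise bound
  have hpt : ∀ a, PA a * ∑ b, |K a b - K' a b| ≤ f a + |PA a - P'A a| := by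
    intro a
    rw [Finset.mul_sum]
    have : f a + |PA a - P'A a| = ∑ b, (|PA a * K a b - P'A a * K' a b| + |PA a - P'A a| * K' a b) := by
      rw [Finset.sum_add_distrib, ← Finset.mul_sum, hK'1, mul_one, hf]
    rw [this]
    apply Finset.sum_le_sum
    intro b _
    have h1 : PA a * |K a b - K' a b| = |PA a * K a b - PA a * K' a b| := by
      rw [← mul_sub, abs_mul, abs_of_nonneg (hPA0 a)]
    rw [h1]
    calc |PA a * K a b - PA a * K' a b|
        ≤ |PA a * K a b - P'A a * K' a b| + |P'A a * K' a b - PA a * K' a b| := abs_sub_le _ _ _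
      _ ≤ |PA a * K a b - P'A a * K' a b| + |PA a - P'A a| * K' a b := by
          gcongr
          rw [← sub_mul, abs_mul, abs_sub_comm, abs_of_nonneg (hK'0 a b)]
  have htot : ∑ a, PA a * ∑ b, |K a b - K' a b| ≤ 2 * ε := by
    calc ∑ a, PA a * ∑ b, |K a b - K' a b|
        ≤ ∑ a, (f a + |PA a - P'A a|) := Finset.sum_le_sum fun a _ => hpt a
      _ = (∑ a, f a) + ∑ a, |PA a - P'A a| := Finset.sum_add_distrib
      _ ≤ ε + ε := by rw [hsum]; linarith
      _ = 2 * ε := by ring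
  by_contra hc
  push_neg at hc
  have hlt : (2 : ℝ) * ε < ∑ a, PA a * ∑ b, |K a b - K' a b| := by
    have h1 : ∑ a, PA a * (2 * ε) < ∑ a, PA a * ∑ b, |K a b - K' a b| := by
      obtain ⟨a0, ha0⟩ : ∃ a, 0 < PA a := by
        by_contra hz
        push_neg at hz
        have : ∑ a, PA a = 0 := Finset.sum_eq_zero fun a _ => le_antisymm (hz a) (hPA0 a)
        rw [hPA1] at this; norm_num at this
      apply Finset.sum_lt_sum
      · intro a _
        rcases lt_or_eq_of_le (hPA0 a) with hpos | hzero
        · exact le_of_lt (mul_lt_mul_of_pos_left (hc a hpos) hpos)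
        · rw [← hzero]; simp
      · exact ⟨a0, Finset.mem_univ a0, mul_lt_mul_of_pos_left (hc a0 ha0) ha0⟩
    calc (2:ℝ) * ε = ∑ a, PA a * (2 * ε) := by rw [← Finset.sum_mul, hPA1, one_mul]
      _ < _ := h1
  linarith
end

section
/- Neyman–Pearson achievability bound: for probability mass functions P and Q on a finite set and any γ₀ > 0, define α = P{x : log(P(x)/Q(x)) > log γ₀} and let β_α be the minimum over randomized tests T : 𝒳 → [0,1] with ∑_x P(x)(1 − T(x)) ≤ 1 − α of ∑_x Q(x) T(x). Then β_α ≤ 1/γ₀. -/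
open Finset
open scoped Classical

/-- Neyman–Pearson achievability bound: with
`α = P{x : log(P(x)/Q(x)) > log γ₀}` (equivalently `P x > γ₀ · Q x`), there is a
randomized test with type-II error at most `1 − α` whose type-I error is at most `1/γ₀`. -/
theorem np_achievability {X : Type*} [Fintype X]
    (P Q : X → ℝ) (γ₀ : ℝ) (hγ : 0 < γ₀)
    (hP0 : ∀ x, 0 ≤ P x) (hP1 : ∑ x, P x = 1)
    (hQ0 : ∀ x, 0 ≤ Q x) (hQ1 : ∑ x, Q x = 1) :
    ∃ T : X → ℝ, (∀ x, 0 ≤ T x ∧ T x ≤ 1) ∧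
      (∑ x, P x * (1 - T x)) ≤
        1 - (∑ x ∈ Finset.univ.filter (fun x => γ₀ * Q x < P x), P x) ∧
      (∑ x, Q x * T x) ≤ 1 / γ₀ := by
  set S := Finset.univ.filter (fun x => γ₀ * Q x < P x) with hS
  refine ⟨fun x => if x ∈ S then 1 else 0, ?_, ?_, ?_⟩
  · intro x; by_cases h : x ∈ S <;> simp [h]
  · have key : ∀ x : X, P x * (1 - if x ∈ S then 1 else 0)
        = P x - (if x ∈ S then P x else 0) := by
      intro x; split <;> ring
    rw [Finset.sum_congr rfl (fun x _ => key x), Finset.sum_sub_distrib, hP1]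
    simp [Finset.sum_ite_mem]
  · have h1 : (∑ x, Q x * if x ∈ S then 1 else 0) = ∑ x ∈ S, Q x := by
      simp [mul_ite, mul_one, mul_zero, Finset.sum_ite_mem]
    rw [h1]
    have h2 : γ₀ * ∑ x ∈ S, Q x ≤ ∑ x ∈ S, P x := by
      rw [Finset.mul_sum]
      exact Finset.sum_le_sum fun x hx => le_of_lt (Finset.mem_filter.mp hx).2
    have h3 : ∑ x ∈ S, P x ≤ 1 := by
      rw [← hP1]
      exact Finset.sum_le_sum_of_subset_of_nonneg (Finset.subset_univ S)
        (fun x _ _ => hP0 x)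
    exact (le_div_iff₀ hγ).mpr (by nlinarith)
end

section
/- Neyman–Pearson converse bound: for probability mass functions P and Q on a finite set, any α ∈ [0,1], any γ > 0, and any randomized test T with ∑_x P(x)(1 − T(x)) ≤ 1 − α, it holds that α ≤ P{x : log(P(x)/Q(x)) > log γ} + γ · ∑_x Q(x) T(x). -/
open Finset
open scoped Classical

/-- Neyman–Pearson converse bound: for any randomized test `T` with type-II error
at most `1 − α`, one has `α ≤ P{x : log(P(x)/Q(x)) > log γ} + γ · ∑ Q(x) T(x)`. -/
theorem np_converse {X : Type*} [Fintype X]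
    (P Q : X → ℝ) (T : X → ℝ) (α γ : ℝ) (hγ : 0 < γ)
    (hα0 : 0 ≤ α) (hα1 : α ≤ 1)
    (hP0 : ∀ x, 0 ≤ P x) (hP1 : ∑ x, P x = 1)
    (hQ0 : ∀ x, 0 ≤ Q x) (hQ1 : ∑ x, Q x = 1)
    (hT : ∀ x, 0 ≤ T x ∧ T x ≤ 1)
    (hPT : ∑ x, P x * (1 - T x) ≤ 1 - α) :
    α ≤ (∑ x ∈ Finset.univ.filter (fun x => γ * Q x < P x), P x) + γ * ∑ x, Q x * T x := by
  have key : α ≤ ∑ x, P x * T x := by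
    have : ∑ x, P x * (1 - T x) = 1 - ∑ x, P x * T x := by
      simp [mul_sub, Finset.sum_sub_distrib, hP1]
    linarith [this ▸ hPT]
  set S := Finset.univ.filter (fun x => γ * Q x < P x) with hS
  have split : ∑ x, P x * T x = ∑ x ∈ S, P x * T x + ∑ x ∈ Sᶜ, P x * T x :=
    (Finset.sum_add_sum_compl S _).symm
  have h1 : ∑ x ∈ S, P x * T x ≤ ∑ x ∈ S, P x := by
    apply Finset.sum_le_sum
    intro x _
    nlinarith [(hT x).1, (hT x).2, hP0 x]
  have h2 : ∑ x ∈ Sᶜ, P x * T x ≤ γ * ∑ x, Q x * T x := by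
    have : ∑ x ∈ Sᶜ, P x * T x ≤ ∑ x ∈ Sᶜ, γ * (Q x * T x) := by
      apply Finset.sum_le_sum
      intro x hx
      have : ¬ γ * Q x < P x := by simpa [hS] using hx
      nlinarith [(hT x).1]
    refine this.trans ?_
    rw [← Finset.mul_sum]
    apply mul_le_mul_of_nonneg_left _ hγ.le
    refine Finset.sum_le_sum_of_subset_of_nonneg (Finset.subset_univ _) ?_
    intro x _ _
    exact mul_nonneg (hQ0 x) (hT x).1
  linarith
end
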